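/- arXiv:1310.6055 — 3 statements merged into one kernel-verified Lean document; each statement's English description precedes it below -/
import Mathlib

section
/- Let y, and maps f^{s}, f^{f} on a normed vector space satisfy ‖y + ρ f^{s}(y)‖ ≤ ‖y‖ and ‖y + (ρ/M) f^{f}(y)‖ ≤ ‖y‖ for some ρ > 0 and M ≥ 1. Then for any α, β > 0 with α + β = 1, and any θ with 0 < θ ≤ min{α ρ, β ρ / M}, one has ‖y + θ (f^{s}(y) + f^{f}(y))‖ ≤ ‖y‖. -/
/-- Forward-Euler monotonicity at step ρ implies it at any smaller step. -/
lemma euler_small_step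
    {H : Type*} [NormedAddCommGroup H] [NormedSpace ℝ H]
    (y v : H) (ρ τ : ℝ) (hρ : 0 < ρ) (hτ0 : 0 ≤ τ) (hτ : τ ≤ ρ)
    (h : ‖y + ρ • v‖ ≤ ‖y‖) : ‖y + τ • v‖ ≤ ‖y‖ := by
  have hne : ρ ≠ 0 := hρ.ne'
  have key : y + τ • v = (1 - τ / ρ) • y + (τ / ρ) • (y + ρ • v) := by
    rw [smul_add, smul_smul, div_mul_cancel₀ _ hne, sub_smul, one_smul]
    abel
  have h1 : 0 ≤ 1 - τ / ρ := by
    have : τ / ρ ≤ 1 := (div_le_one hρ).mpr hτ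
    linarith
  have h2 : 0 ≤ τ / ρ := div_nonneg hτ0 hρ.le
  calc ‖y + τ • v‖ ≤ (1 - τ / ρ) * ‖y‖ + (τ / ρ) * ‖y + ρ • v‖ := by
        rw [key]
        refine (norm_add_le _ _).trans ?_
        rw [norm_smul, norm_smul, Real.norm_of_nonneg h1, Real.norm_of_nonneg h2]
    _ ≤ (1 - τ / ρ) * ‖y‖ + (τ / ρ) * ‖y‖ := by nlinarith
    _ = ‖y‖ := by ring

/-- convex combination argument for monotonicity of an Euler step with
the full right-hand side from Euler monotonicity of the slow and fast parts. -/
theorem euler_step_monotone_sum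
    {H : Type*} [NormedAddCommGroup H] [NormedSpace ℝ H]
    (y : H) (fs ff : H → H) (ρ M : ℝ) (hρ : 0 < ρ) (hM : 1 ≤ M)
    (hslow : ‖y + ρ • fs y‖ ≤ ‖y‖)
    (hfast : ‖y + (ρ / M) • ff y‖ ≤ ‖y‖)
    (α β : ℝ) (hα : 0 < α) (hβ : 0 < β) (hαβ : α + β = 1)
    (θ : ℝ) (hθ0 : 0 < θ) (hθ : θ ≤ min (α * ρ) (β * ρ / M)) :
    ‖y + θ • (fs y + ff y)‖ ≤ ‖y‖ := by
  have hM0 : 0 < M := lt_of_lt_of_le one_pos hM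
  have hθ1 : θ ≤ α * ρ := hθ.trans (min_le_left _ _)
  have hθ2 : θ ≤ β * ρ / M := hθ.trans (min_le_right _ _)
  have hs : θ / α ≤ ρ := (div_le_iff₀' hα).mpr hθ1
  have hf : θ / β ≤ ρ / M := by
    rw [div_le_div_iff₀ hβ hM0]
    calc θ * M ≤ (β * ρ / M) * M := by nlinarith
      _ = ρ * β := by field_simp
  have hcs : ‖y + (θ / α) • fs y‖ ≤ ‖y‖ :=
    euler_small_step y (fs y) ρ (θ/α) hρ (div_nonneg hθ0.le hα.le) hs hslow
  have hcf : ‖y + (θ / β) • ff y‖ ≤ ‖y‖ :=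
    euler_small_step y (ff y) (ρ/M) (θ/β) (div_pos hρ hM0) (div_nonneg hθ0.le hβ.le) hf hfast
  have key : y + θ • (fs y + ff y)
      = α • (y + (θ / α) • fs y) + β • (y + (θ / β) • ff y) := by
    match_scalars
    · field_simp; linarith
    · field_simp
    · field_simp
  calc ‖y + θ • (fs y + ff y)‖
      ≤ α * ‖y + (θ / α) • fs y‖ + β * ‖y + (θ / β) • ff y‖ := by
        rw [key]
        refine (norm_add_le _ _).trans ?_
        rw [norm_smul, norm_smul, Real.norm_of_nonneg hα.le, Real.norm_of_nonneg hβ.le]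
    _ ≤ α * ‖y‖ + β * ‖y‖ := by nlinarith
    _ = ‖y‖ := by rw [← add_mul, hαβ, one_mul]
end

section
/- Let (A^{ff}, b^{f}) be a Runge-Kutta scheme with s^{f} stages satisfying b^{f}_i > 0 for all i, let (A^{ss}, b^{s}) be a scheme with s^{s} stages, and let B^{f} = diag(b^{f}), B^{s} = diag(b^{s}). For any matrices A^{sf,λ} ∈ ℝ^{s^{s}×s^{f}}, λ = 1,…,M, define A^{fs,λ} := (B^{f})^{-1} (b^{f} (b^{s})^T - (A^{sf,λ})^T B^{s}). Then for every λ the coupling stability condition (A^{fs,λ})^T B^{f} + B^{s} A^{sf,λ} - b^{s} (b^{f})^T = 0 holds; conversely, if the stability condition holds for all λ then A^{fs,λ} is given by the above formula. -/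
open Matrix

lemma vecMulVec_transpose' {m n : Type*} (w : m → ℝ) (v : n → ℝ) :
    (Matrix.vecMulVec w v)ᵀ = Matrix.vecMulVec v w := by
  ext i j; simp [Matrix.vecMulVec_apply, mul_comm]

/-- with positive fast weights, the multirate GARK scheme is
stability-decoupled iff the fast-slow couplings are given by the explicit formula
A^{fs,λ} = (B^f)⁻¹ (b^f (b^s)ᵀ − (A^{sf,λ})ᵀ B^s). -/
theorem stability_decoupled_coupling_formula
    {sf ss : ℕ} (M : ℕ)
    (bf : Fin sf → ℝ) (bs : Fin ss → ℝ)
    (hbf : ∀ i, 0 < bf i)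
    (Asf : ℕ → Matrix (Fin ss) (Fin sf) ℝ)
    (Afs : ℕ → Matrix (Fin sf) (Fin ss) ℝ)
    (Bf : Matrix (Fin sf) (Fin sf) ℝ) (hBf : Bf = Matrix.diagonal bf)
    (Bs : Matrix (Fin ss) (Fin ss) ℝ) (hBs : Bs = Matrix.diagonal bs) :
    (∀ lam, 1 ≤ lam → lam ≤ M →
        Afs lam = Bf⁻¹ * (Matrix.vecMulVec bf bs - (Asf lam)ᵀ * Bs)) ↔
    (∀ lam, 1 ≤ lam → lam ≤ M →
        (Afs lam)ᵀ * Bf + Bs * Asf lam - Matrix.vecMulVec bs bf = 0) := by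
  have hdet : IsUnit Bf.det := by
    rw [hBf, Matrix.det_diagonal]
    exact isUnit_iff_ne_zero.mpr (Finset.prod_ne_zero_iff.mpr fun i _ => (hbf i).ne')
  have hBfT : Bfᵀ = Bf := by rw [hBf, Matrix.diagonal_transpose]
  have hBsT : Bsᵀ = Bs := by rw [hBs, Matrix.diagonal_transpose]
  constructor
  · intro h lam h1 h2
    rw [h lam h1 h2, Matrix.transpose_mul, Matrix.transpose_nonsing_inv, hBfT,
        Matrix.mul_assoc, Matrix.nonsing_inv_mul Bf hdet, Matrix.mul_one,
        Matrix.transpose_sub, Matrix.transpose_mul, hBsT, Matrix.transpose_transpose,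
        vecMulVec_transpose']
    abel
  · intro h lam h1 h2
    have h' := h lam h1 h2
    have h2' : (Afs lam)ᵀ * Bf = Matrix.vecMulVec bs bf - Bs * Asf lam := by
      have := sub_eq_zero.mp h'
      linear_combination (norm := abel) this
    have h3 : Bf * Afs lam = Matrix.vecMulVec bf bs - (Asf lam)ᵀ * Bs := by
      have := congrArg Matrix.transpose h2'
      rwa [Matrix.transpose_mul, hBfT, Matrix.transpose_transpose,
        Matrix.transpose_sub, Matrix.transpose_mul, hBsT, vecMulVec_transpose'] at this
    calc Afs lam = Bf⁻¹ * (Bf * Afs lam) := by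
          rw [← Matrix.mul_assoc, Matrix.nonsing_inv_mul Bf hdet, Matrix.one_mul]
      _ = Bf⁻¹ * (Matrix.vecMulVec bf bs - (Asf lam)ᵀ * Bs) := by rw [h3]
end

section
/- Let b^{f} = (1/2, 1/2), b^{s} = (3/(4M+2), (4M−1)/(4M+2)), A^{f} = [[1/4, −M/2],[(M+1)/2, 1/4]], D = (B^{f})^{-1} (A^{f})ᵀ B^{s}, where B^{f} = diag(b^{f}), B^{s} = diag(b^{s}). Then the following order-two conditions hold: (b^{f})ᵀ𝟙 = 1, (b^{f})ᵀ A^{f} 𝟙 = 1/2, (b^{s})ᵀ𝟙 = 1, (b^{s})ᵀ D 𝟙 = 1/2, and (b^{s})ᵀ A^{f} 𝟙 = M/2. -/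
open Matrix

/-- the given nonlinearly stable additive Runge-Kutta data satisfy
the order-two conditions. -/
theorem order_two_conditions_stable_ARK
    (M : ℝ) (hM : 0 < M)
    (bf bs : Fin 2 → ℝ)
    (hbf : bf = ![1/2, 1/2])
    (hbs : bs = ![3 / (4*M + 2), (4*M - 1) / (4*M + 2)])
    (Af : Matrix (Fin 2) (Fin 2) ℝ)
    (hAf : Af = !![1/4, -M/2; (M + 1)/2, 1/4])
    (D : Matrix (Fin 2) (Fin 2) ℝ)
    (hD : D = (Matrix.diagonal bf)⁻¹ * Afᵀ * Matrix.diagonal bs) :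
    bf ⬝ᵥ (1 : Fin 2 → ℝ) = 1 ∧
    bf ⬝ᵥ (Af *ᵥ (1 : Fin 2 → ℝ)) = 1/2 ∧
    bs ⬝ᵥ (1 : Fin 2 → ℝ) = 1 ∧
    bs ⬝ᵥ (D *ᵥ (1 : Fin 2 → ℝ)) = 1/2 ∧
    bs ⬝ᵥ (Af *ᵥ (1 : Fin 2 → ℝ)) = M / 2 := by
  have h2 : (4:ℝ)*M + 2 ≠ 0 := by nlinarith
  have hinv : (Matrix.diagonal bf)⁻¹ = Matrix.diagonal ![2, 2] := by
    apply Matrix.inv_eq_right_inv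
    subst hbf
    ext i j
    fin_cases i <;> fin_cases j <;> simp [Matrix.mul_apply, Fin.sum_univ_two, Matrix.diagonal]
  subst hbf hbs hAf hD
  rw [hinv]
  refine ⟨?_, ?_, ?_, ?_, ?_⟩ <;>
    simp [Matrix.mulVec, dotProduct, Fin.sum_univ_two, Matrix.mul_apply,
      Matrix.diagonal, Matrix.transpose] <;>
    field_simp <;> ring
end
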